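/- arXiv:2511.02387 — 4 statements merged into one kernel-verified Lean document; each statement's English description precedes it below -/
import Mathlib

section
/- For every n > k > 0 there exists a real n×k matrix A with orthonormal columns such that for every k-element subset S of its rows, the k×k submatrix A_S formed by those rows has smallest singular value at most 1/√n; equivalently, for every S there is a unit vector x ∈ ℝᵏ with ‖A_S x‖ ≤ 1/√n. In particular, the bound √n in the Goreinov–Tyrtyshnikov–Zamarashkin hypothesis (that some k×k submatrix has an inverse of spectral norm at most √n) cannot be improved for any n and k. -/
/-!
Take for `A` the first `k` columns of the Householder reflection `1 - 2 v vᵀ`, where `v` is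
constant on the first `k` and on the last `n - k` coordinates: `A` stacks `1 + q J` on a
constant block `g J` (`J` all ones), orthonormality amounting to `2q + kq² + (n - k)g² = 0`.
Choose `q` with `1 + kq = -1/√n`, the eigenvalue of `1 + q J` on the all-ones vector.

Since `|S| = k`, the rows `S` contain as many bottom rows as they miss top rows. If they
contain none, `S` is the top block and the all-ones vector is shrunk by `1/√n`. If they miss
two top rows `a ≠ b`, then `A_S (e_a - e_b) = 0`, as the bottom rows only see coordinate sums.
If they swap one top row `r` for one bottom row, `e_r + s 𝟙` for a suitable `s` is shrunk by
exactly `1/√n`.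
-/

open Matrix Finset

/-- The rows of `A` indexed by `S` form a submatrix with smallest singular value at most `√c`. -/
def ShrinksOnRows {ι κ : Type*} [Fintype κ] (A : Matrix ι κ ℝ) (S : Finset ι) (c : ℝ) : Prop :=
  ∃ y : κ → ℝ, y ≠ 0 ∧ ∑ i ∈ S, (A *ᵥ y) i ^ 2 ≤ c * ∑ j, y j ^ 2

theorem ShrinksOnRows.exists_norm_eq_one {ι κ : Type*} [Fintype κ] {A : Matrix ι κ ℝ}
    {S : Finset ι} {c : ℝ} (h : ShrinksOnRows A S c) :
    ∃ x : EuclideanSpace ℝ κ, ‖x‖ = 1 ∧ √(∑ i ∈ S, (∑ j, A i j * x j) ^ 2) ≤ √c := by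
  obtain ⟨y, hy, hle⟩ := h
  set v : EuclideanSpace ℝ κ := WithLp.toLp 2 y
  have hv : v ≠ 0 := fun h0 => hy (congrArg WithLp.ofLp h0)
  have hnorm : ‖v‖ ^ 2 = ∑ j, y j ^ 2 := by simp [v, EuclideanSpace.norm_sq_eq]
  refine ⟨‖v‖⁻¹ • v, by simpa using norm_smul_inv_norm (𝕜 := ℝ) hv, Real.sqrt_le_sqrt ?_⟩
  calc ∑ i ∈ S, (∑ j, A i j * (‖v‖⁻¹ • v) j) ^ 2
      = (∑ i ∈ S, (A *ᵥ y) i ^ 2) / ‖v‖ ^ 2 := by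
        simp only [PiLp.smul_apply, smul_eq_mul, mul_left_comm _ ‖v‖⁻¹, ← mul_sum, mul_pow,
          inv_pow, div_eq_inv_mul, mulVec, dotProduct, v]
    _ ≤ c := by rw [div_le_iff₀ (by positivity), hnorm]; exact hle

theorem Fin.sum_finset_add {M : Type*} [AddCommMonoid M] {k m : ℕ} (S : Finset (Fin (k + m)))
    (f : Fin (k + m) → M) :
    ∑ i ∈ S, f i = ∑ a with Fin.castAdd m a ∈ S, f (Fin.castAdd m a) +
      ∑ b with Fin.natAdd k b ∈ S, f (Fin.natAdd k b) := by
  rw [sum_filter, sum_filter, ← Fin.sum_univ_add (fun i => if i ∈ S then f i else 0),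
    sum_ite_mem, univ_inter]

theorem Fin.card_finset_add {k m : ℕ} (S : Finset (Fin (k + m))) :
    #S = #{a | Fin.castAdd m a ∈ S} + #{b | Fin.natAdd k b ∈ S} := by
  simp only [card_eq_sum_ones]
  exact Fin.sum_finset_add S fun _ => 1

theorem Fin.sum_finset_add_of_eq {R : Type*} [NonAssocSemiring R] {k m : ℕ}
    {S : Finset (Fin (k + m))} {f : Fin (k + m) → R} {u w : R}
    (hu : ∀ a, Fin.castAdd m a ∈ S → f (Fin.castAdd m a) = u)
    (hw : ∀ b, Fin.natAdd k b ∈ S → f (Fin.natAdd k b) = w) :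
    ∑ i ∈ S, f i = #{a | Fin.castAdd m a ∈ S} * u + #{b | Fin.natAdd k b ∈ S} * w := by
  rw [Fin.sum_finset_add, sum_congr rfl fun a ha => hu a (mem_filter.1 ha).2,
    sum_congr rfl fun b hb => hw b (mem_filter.1 hb).2]
  simp only [Finset.sum_const, nsmul_eq_mul]

def extremalMatrix (k m : ℕ) (q g : ℝ) : Matrix (Fin (k + m)) (Fin k) ℝ :=
  of (Fin.append (fun a j => (1 : Matrix (Fin k) (Fin k) ℝ) a j + q) fun _ _ => g)

section extremalMatrix

variable {k m : ℕ} {q g : ℝ}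

theorem extremalMatrix_mulVec_castAdd (y : Fin k → ℝ) (a : Fin k) :
    (extremalMatrix k m q g *ᵥ y) (Fin.castAdd m a) = y a + q * ∑ j, y j := by
  simp [extremalMatrix, mulVec, dotProduct, add_mul, sum_add_distrib, one_apply, mul_sum]

theorem extremalMatrix_mulVec_natAdd (y : Fin k → ℝ) (b : Fin m) :
    (extremalMatrix k m q g *ᵥ y) (Fin.natAdd k b) = g * ∑ j, y j := by
  simp [extremalMatrix, mulVec, dotProduct, mul_sum]

theorem transpose_extremalMatrix_mul_self (h : 2 * q + k * q ^ 2 + m * g ^ 2 = 0) :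
    (extremalMatrix k m q g)ᵀ * extremalMatrix k m q g = 1 := by
  ext a b
  simp only [mul_apply, transpose_apply, Fin.sum_univ_add, extremalMatrix, of_apply,
    Fin.append_left, Fin.append_right, one_apply, mul_add, add_mul, mul_ite, ite_mul, mul_one,
    one_mul, mul_zero, zero_mul, sum_add_distrib, sum_ite_eq', mem_univ, if_true, sum_const,
    card_univ, Fintype.card_fin, nsmul_eq_mul]
  rcases eq_or_ne a b with rfl | hab
  · simp only [if_true]
    linear_combination h
  · simp only [hab, hab.symm, if_false, zero_add]
    linear_combination h

variable {S : Finset (Fin (k + m))}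

theorem shrinksOnRows_extremalMatrix_of_top (hk : 0 < k) (hq : 1 + k * q = -1 / √(k + m))
    (htop : ∀ a, Fin.castAdd m a ∈ S) (hbot : ∀ b, Fin.natAdd k b ∉ S) :
    ShrinksOnRows (extremalMatrix k m q g) S (1 / (k + m)) := by
  refine ⟨fun _ => 1, Function.ne_iff.2 ⟨⟨0, hk⟩, one_ne_zero⟩, le_of_eq ?_⟩
  rw [Fin.sum_finset_add_of_eq (u := (1 + k * q) ^ 2) (w := 0)
    (fun a _ => by simp [extremalMatrix_mulVec_castAdd, mul_comm])
    (fun b hb => absurd hb (hbot b))]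
  simp only [htop, filter_true, card_univ, Fintype.card_fin, hq, div_pow, even_two,
    Even.neg_pow, one_pow, one_div, mul_zero, add_zero, sum_const, nsmul_eq_mul, mul_one]
  rw [Real.sq_sqrt (by positivity), mul_comm]

theorem shrinksOnRows_extremalMatrix_of_one_bottom {r : Fin k} {b₀ : Fin m}
    (hq : 1 + k * q = -1 / √(k + m)) (hg : 2 * q + k * q ^ 2 + m * g ^ 2 = 0)
    (htop : ∀ a, Fin.castAdd m a ∈ S ↔ a ≠ r) (hbot : ∀ b, Fin.natAdd k b ∈ S ↔ b = b₀) :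
    ShrinksOnRows (extremalMatrix k m q g) S (1 / (k + m)) := by
  have hk : (0 : ℝ) < k := by exact_mod_cast r.pos
  have hm : (0 : ℝ) < m := by exact_mod_cast b₀.pos
  set t := √(k + m : ℝ)
  have ht0 : 0 < t := by positivity
  have ht : t ^ 2 = k + m := Real.sq_sqrt (by positivity)
  have hq' : q = -(1 + 1 / t) / k := by field_simp at hq ⊢; linear_combination hq
  have hg' : m * g ^ 2 = (1 - 1 / t ^ 2) / k := by
    rw [hq'] at hg; field_simp at hg ⊢; linear_combination hg
  set s := (-(m / t) - 1) / k
  have hsum : 1 + k * s = -(m / t) := by simp only [s]; field_simp; ring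
  have hval_top : s + q * (1 + k * s) = -1 / (k + m) := by
    rw [hsum, hq']; simp only [s]; rw [← ht]; field_simp; linear_combination -ht
  have hval_bot : (g * (1 + k * s)) ^ 2 = m * (1 - 1 / t ^ 2) / (k * t ^ 2) := by
    rw [hsum]; linear_combination (m / t ^ 2) * hg'
  set y : Fin k → ℝ := Pi.single r 1 + fun _ => s
  have hy_sum : ∑ j, y j = -(m / t) := by simp [y, sum_add_distrib, hsum]
  refine ⟨y, fun h => ?_, le_of_eq ?_⟩
  · simp only [h, Pi.zero_apply, sum_const_zero, zero_eq_neg] at hy_sum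
    exact (div_pos hm ht0).ne' hy_sum
  rw [Fin.sum_finset_add_of_eq (u := (s + q * (1 + k * s)) ^ 2) (w := (g * (1 + k * s)) ^ 2)
    (fun a ha => ?_) (fun b hb => ?_)]
  · have hcard_top : #{a | Fin.castAdd m a ∈ S} = k - 1 := by
      simp only [htop, filter_ne', card_erase_of_mem (mem_univ _), card_univ, Fintype.card_fin]
    have hcard_bot : #{b | Fin.natAdd k b ∈ S} = 1 := by
      simp only [hbot, filter_eq', mem_univ, if_true, card_singleton]
    have hnorm : ∑ j, y j ^ 2 = 1 + 2 * s + k * s ^ 2 := by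
      simp [y, add_sq, sum_add_distrib, Pi.single_apply]
    rw [hcard_top, hcard_bot, Nat.cast_pred r.pos, hval_top, hval_bot, hnorm, ← ht]
    simp only [s]
    field_simp
    linear_combination (1 + m - k) * ht
  · rw [extremalMatrix_mulVec_castAdd, hy_sum, ← hsum]
    simp [y, (htop a).1 ha]
  · rw [extremalMatrix_mulVec_natAdd, hy_sum, hsum]

theorem shrinksOnRows_extremalMatrix_of_two_missing {a b : Fin k} (hab : a ≠ b)
    (ha : Fin.castAdd m a ∉ S) (hb : Fin.castAdd m b ∉ S) {c : ℝ} (hc : 0 ≤ c) :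
    ShrinksOnRows (extremalMatrix k m q g) S c := by
  refine ⟨Pi.single a 1 - Pi.single b 1, fun h => by simpa [hab] using congrFun h a, ?_⟩
  have hzero : ∀ i ∈ S, (extremalMatrix k m q g *ᵥ (Pi.single a 1 - Pi.single b 1)) i = 0 := by
    intro i hi
    induction i using Fin.addCases with
    | left i =>
      have hia : i ≠ a := by rintro rfl; exact ha hi
      have hib : i ≠ b := by rintro rfl; exact hb hi
      simp [extremalMatrix_mulVec_castAdd, hia, hib, sum_sub_distrib]
    | right i => simp [extremalMatrix_mulVec_natAdd, sum_sub_distrib]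
  rw [sum_eq_zero fun i hi => by rw [hzero i hi, zero_pow two_ne_zero]]
  positivity

theorem shrinksOnRows_extremalMatrix (hk : 0 < k) (hq : 1 + k * q = -1 / √(k + m))
    (hg : 2 * q + k * q ^ 2 + m * g ^ 2 = 0) (hS : #S = k) :
    ShrinksOnRows (extremalMatrix k m q g) S (1 / (k + m)) := by
  have hcount : #{a | Fin.castAdd m a ∉ S} = #{b | Fin.natAdd k b ∈ S} := by
    have := card_filter_add_card_filter_not (s := univ) (fun a : Fin k => Fin.castAdd m a ∈ S)
    rw [card_univ, Fintype.card_fin] at this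
    have := Fin.card_finset_add S
    omega
  obtain h0 | h1 | h2 : #{b | Fin.natAdd k b ∈ S} = 0 ∨ #{b | Fin.natAdd k b ∈ S} = 1 ∨
      1 < #{b | Fin.natAdd k b ∈ S} := by omega
  · have htop := filter_eq_empty_iff.1 (card_eq_zero.1 (hcount.trans h0))
    have hbot := filter_eq_empty_iff.1 (card_eq_zero.1 h0)
    exact shrinksOnRows_extremalMatrix_of_top hk hq (fun a => not_not.1 (htop (mem_univ a)))
      (fun b => hbot (mem_univ b))
  · obtain ⟨r, hr⟩ := card_eq_one.1 (hcount.trans h1)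
    obtain ⟨b₀, hb₀⟩ := card_eq_one.1 h1
    refine shrinksOnRows_extremalMatrix_of_one_bottom (r := r) (b₀ := b₀) hq hg (fun a => ?_)
      (fun b => by simpa using Finset.ext_iff.1 hb₀ b)
    rw [← not_iff_not, not_not]
    simpa using Finset.ext_iff.1 hr a
  · obtain ⟨a, ha, b, hb, hab⟩ := one_lt_card.1 (hcount ▸ h2)
    exact shrinksOnRows_extremalMatrix_of_two_missing hab (mem_filter.1 ha).2
      (mem_filter.1 hb).2 (by positivity)

end extremalMatrix

theorem exists_extremalMatrix_params {k m : ℕ} (hk : 0 < k) (hm : 0 < m) :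
    ∃ q g : ℝ, 1 + k * q = -1 / √(k + m) ∧ 2 * q + k * q ^ 2 + m * g ^ 2 = 0 := by
  set t := √(k + m : ℝ)
  have ht0 : 0 < t := by positivity
  have ht : t ^ 2 = k + m := Real.sq_sqrt (by positivity)
  have ht1 : 1 ≤ t ^ 2 := by rw [ht]; exact_mod_cast (show 1 ≤ k + m by omega)
  refine ⟨-(1 + 1 / t) / k, √((1 - 1 / t ^ 2) / (k * m)), by field_simp; ring, ?_⟩
  rw [Real.sq_sqrt (div_nonneg (by rw [sub_nonneg, div_le_one (by positivity)]; exact ht1)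
    (by positivity))]
  field_simp
  ring

/-- **Sharpness of the Goreinov–Tyrtyshnikov–Zamarashkin bound.**
For every `n > k > 0` there is a real `n × k` matrix `A` with orthonormal columns
(`Aᵀ A = 1`) such that for every `k`-element subset `S` of rows there is a unit vector
`x ∈ ℝᵏ` with `‖A_S x‖ ≤ 1 / √n`  (i.e. the smallest singular value of every `k × k`
submatrix `A_S` is at most `1 / √n`, so the bound `√n` on the spectral norm of the
inverse of the best submatrix cannot be improved). -/
theorem gtz_bound_cannot_be_improved (n k : ℕ) (hk : 0 < k) (hkn : k < n) :
    ∃ A : Matrix (Fin n) (Fin k) ℝ,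
      Aᵀ * A = 1 ∧
      ∀ S : Finset (Fin n), S.card = k →
        ∃ x : EuclideanSpace ℝ (Fin k), ‖x‖ = 1 ∧
          Real.sqrt (∑ i ∈ S, (∑ j, A i j * x j) ^ 2) ≤ 1 / Real.sqrt n := by
  obtain ⟨m, rfl⟩ := Nat.exists_eq_add_of_le hkn.le
  obtain ⟨q, g, hq, hg⟩ := exists_extremalMatrix_params hk (by omega : 0 < m)
  refine ⟨extremalMatrix k m q g, transpose_extremalMatrix_mul_self hg, fun S hS => ?_⟩
  obtain ⟨x, hx, hle⟩ := (shrinksOnRows_extremalMatrix hk hq hg hS).exists_norm_eq_one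
  refine ⟨x, hx, hle.trans_eq ?_⟩
  rw [Real.sqrt_div' _ (by positivity), Real.sqrt_one, Nat.cast_add]
end

section
/- For every n ≥ 2 and every index i ∈ {1,…,n}, the infimum over unit vectors v ∈ ℝⁿ with v₁ + v₂ + ⋯ + v_n = 0 of the norm of the orthogonal projection of v onto the coordinate hyperplane {x ∈ ℝⁿ : x_i = 0} equals 1/√n; equivalently, the largest principal angle between the hyperplane of zero-sum vectors and each coordinate hyperplane equals arccos(1/√n). (This realizes the extremal subspace associated with the n-cycle, whose G-induced edge weights are all equal.) -/
/-!
If `∑ v = 0` then `v i = -∑_{j ≠ i} v j`, so Cauchy–Schwarz gives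
`v i ^ 2 ≤ (n - 1) ∑_{j ≠ i} v j ^ 2` and hence `‖v‖ ^ 2 ≤ n ∑_{j ≠ i} v j ^ 2`.
Equality holds for the vector with entry `1 - n` at `i` and `1` elsewhere, which after
normalisation attains the bound `1 / √n`.
-/

open Finset

section ZeroSum

variable {ι R : Type*} [Fintype ι] [DecidableEq ι]

theorem sum_sq_le_card_mul_sum_erase_sq [CommRing R] [LinearOrder R] [IsStrictOrderedRing R]
    {f : ι → R} (hf : ∑ j, f j = 0) (i : ι) :
    ∑ j, f j ^ 2 ≤ Fintype.card ι * ∑ j ∈ univ.erase i, f j ^ 2 := by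
  have hcard : ((univ.erase i).card : R) + 1 = Fintype.card ι := by
    rw [card_erase_of_mem (mem_univ i), card_univ, Nat.cast_pred (Fintype.card_pos_iff.2 ⟨i⟩),
      sub_add_cancel]
  have hfi : f i = -∑ j ∈ univ.erase i, f j := by
    rw [← add_sum_erase _ _ (mem_univ i)] at hf
    exact eq_neg_of_add_eq_zero_left hf
  have hcs : f i ^ 2 ≤ (univ.erase i).card * ∑ j ∈ univ.erase i, f j ^ 2 := by
    rw [hfi, neg_sq]
    exact sq_sum_le_card_mul_sum_sq
  rw [← add_sum_erase _ _ (mem_univ i), ← hcard]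
  linarith

noncomputable def zeroSumSpike (i : ι) : EuclideanSpace ℝ ι :=
  WithLp.toLp 2 fun j => if j = i then 1 - Fintype.card ι else 1

variable (i : ι)

@[simp]
theorem zeroSumSpike_apply_self : zeroSumSpike i i = 1 - Fintype.card ι := by
  simp [zeroSumSpike]

theorem zeroSumSpike_apply_of_ne {j : ι} (hj : j ≠ i) : zeroSumSpike i j = 1 := by
  simp [zeroSumSpike, hj]

theorem sum_erase_zeroSumSpike : ∑ j ∈ univ.erase i, zeroSumSpike i j = Fintype.card ι - 1 := by
  rw [sum_eq_card_nsmul (f := fun j => zeroSumSpike i j) fun j hj =>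
    zeroSumSpike_apply_of_ne i (ne_of_mem_erase hj)]
  simp [card_erase_of_mem, Nat.cast_pred (Fintype.card_pos_iff.2 ⟨i⟩)]

theorem sum_erase_zeroSumSpike_sq :
    ∑ j ∈ univ.erase i, zeroSumSpike i j ^ 2 = Fintype.card ι - 1 := by
  rw [← sum_erase_zeroSumSpike]
  exact sum_congr rfl fun j hj => by rw [zeroSumSpike_apply_of_ne i (ne_of_mem_erase hj), one_pow]

theorem sum_zeroSumSpike : ∑ j, zeroSumSpike i j = 0 := by
  rw [← add_sum_erase _ _ (mem_univ i), sum_erase_zeroSumSpike, zeroSumSpike_apply_self]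
  ring

theorem norm_zeroSumSpike_sq :
    ‖zeroSumSpike i‖ ^ 2 = Fintype.card ι * ∑ j ∈ univ.erase i, zeroSumSpike i j ^ 2 := by
  rw [EuclideanSpace.real_norm_sq_eq, ← add_sum_erase _ _ (mem_univ i),
    sum_erase_zeroSumSpike_sq, zeroSumSpike_apply_self]
  ring

theorem inv_card_le_sum_erase_sq {v : EuclideanSpace ℝ ι} (hv : ‖v‖ = 1) (h0 : ∑ j, v j = 0) :
    (Fintype.card ι : ℝ)⁻¹ ≤ ∑ j ∈ univ.erase i, v j ^ 2 := by
  have h := sum_sq_le_card_mul_sum_erase_sq h0 i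
  rw [← EuclideanSpace.real_norm_sq_eq, hv, one_pow] at h
  exact (inv_le_iff_one_le_mul₀' (by exact_mod_cast Fintype.card_pos_iff.2 ⟨i⟩)).2 h

theorem exists_norm_eq_one_sum_eq_zero_sum_erase_sq_eq (hι : 2 ≤ Fintype.card ι) :
    ∃ v : EuclideanSpace ℝ ι, ‖v‖ = 1 ∧ ∑ j, v j = 0 ∧
      ∑ j ∈ univ.erase i, v j ^ 2 = (Fintype.card ι : ℝ)⁻¹ := by
  set u := zeroSumSpike i
  have hcard : (2 : ℝ) ≤ Fintype.card ι := by exact_mod_cast hι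
  have hu : ‖u‖ ^ 2 = Fintype.card ι * ∑ j ∈ univ.erase i, u j ^ 2 := norm_zeroSumSpike_sq i
  have hS : ∑ j ∈ univ.erase i, u j ^ 2 ≠ 0 := by
    rw [sum_erase_zeroSumSpike_sq]
    linarith
  have hu0 : u ≠ 0 := by
    rw [← norm_ne_zero_iff, ← pow_ne_zero_iff two_ne_zero, hu]
    exact mul_ne_zero (by linarith : (0 : ℝ) < _).ne' hS
  refine ⟨‖u‖⁻¹ • u, norm_smul_inv_norm hu0, ?_, ?_⟩
  · simp only [PiLp.smul_apply, smul_eq_mul, ← mul_sum, sum_zeroSumSpike, mul_zero, u]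
  · simp only [PiLp.smul_apply, smul_eq_mul, mul_pow, ← mul_sum, inv_pow, hu]
    field_simp

end ZeroSum

/-- For every `n ≥ 2` and every coordinate `i`, the infimum, over unit vectors
`v ∈ ℝⁿ` with zero coordinate sum, of the norm of the orthogonal projection of `v`
onto the coordinate hyperplane `{x : x i = 0}` (that norm being
`√(∑_{j ≠ i} v j ^ 2)`) equals `1 / √n`; i.e. the largest principal angle between the
zero-sum hyperplane and each coordinate hyperplane is `arccos (1/√n)`. -/
theorem zero_sum_hyperplane_deviation (n : ℕ) (hn : 2 ≤ n) (i : Fin n) :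
    sInf {r : ℝ | ∃ v : EuclideanSpace ℝ (Fin n), ‖v‖ = 1 ∧ (∑ j, v j) = 0 ∧
        r = Real.sqrt (∑ j ∈ Finset.univ.erase i, v j ^ 2)} = 1 / Real.sqrt n := by
  have hsqrt : 1 / Real.sqrt n = Real.sqrt (Fintype.card (Fin n) : ℝ)⁻¹ := by
    rw [Fintype.card_fin, Real.sqrt_inv, one_div]
  obtain ⟨v, hv1, hv0, hvi⟩ :=
    exists_norm_eq_one_sum_eq_zero_sum_erase_sq_eq i (by rwa [Fintype.card_fin])
  refine IsLeast.csInf_eq ⟨⟨v, hv1, hv0, by rw [hvi, hsqrt]⟩, ?_⟩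
  rintro r ⟨w, hw1, hw0, rfl⟩
  rw [hsqrt]
  exact Real.sqrt_le_sqrt (inv_card_le_sum_erase_sq i hw1 hw0)
end

section
/- Let G be a nontrivial 2-connected series-parallel graph on n edges with a chosen pair of terminals, and let G* be the dual two-terminal series-parallel graph obtained by exchanging the roles of parallel and serial compositions in the decomposition of G (so G* has the same edge set and n edges). Then for every edge e, the G*-induced weight of e is the reciprocal of the G-induced weight of e: w*_e = 1/w_e. -/
/-- Decomposition tree of a two-terminal series-parallel graph: a leaf is a single
edge, `par` is a parallel composition, `ser` is a serial composition. -/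
inductive SPTree (E : Type) : Type
  | leaf (e : E) : SPTree E
  | par (ts : List (SPTree E)) : SPTree E
  | ser (ts : List (SPTree E)) : SPTree E

/-- The list of edges (leaves) of a series-parallel decomposition tree. -/
def SPTree.edgeList {E : Type} : SPTree E → List E
  | .leaf e => [e]
  | .par ts => (ts.attach.map (fun s => edgeList s.1)).flatten
  | .ser ts => (ts.attach.map (fun s => edgeList s.1)).flatten
decreasing_by
  all_goals simp only [SPTree.par.sizeOf_spec, SPTree.ser.sizeOf_spec]
  all_goals have := List.sizeOf_lt_of_mem s.2
  all_goals omega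

/-- Number of edges of (the subgraph described by) a decomposition tree. -/
def SPTree.numEdges {E : Type} (t : SPTree E) : ℕ := t.edgeList.length

/-- φ(x) = x (n - x). -/
noncomputable def phiR (n x : ℕ) : ℝ := (x : ℝ) * ((n : ℝ) - (x : ℝ))

/-- `SPWeight n b t e x` : the contribution to the `G`-induced weight of edge `e`
coming from the part of the decomposition chain below node `t`; `b = true` when `t`
is the root or the child of a serial node ("parallel position"), `b = false` when `t`
is the child of a parallel node ("serial position").  Children of parallel nodes
contribute numerators `φ(|Γ|)`, children of serial nodes contribute denominators
`φ(|Γ|)⁻¹`, and a chain ending in a leaf on a parallel position is padded by a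
dummy serial decomposition.  For a 2-sp-graph whose decomposition tree `t` is
parallel at the root, the `G`-induced weight `w_e` is characterized by
`SPWeight n true t e w_e` (`n` = total number of edges). -/
inductive SPWeight {E : Type} (n : ℕ) : Bool → SPTree E → E → ℝ → Prop
  | leafP (e : E) : SPWeight n true (.leaf e) e 1
  | leafS (e : E) : SPWeight n false (.leaf e) e (phiR n 1)⁻¹
  | par {ts : List (SPTree E)} {t : SPTree E} {e : E} {x : ℝ} :
      t ∈ ts → SPWeight n false t e x →
      SPWeight n true (.par ts) e (phiR n t.numEdges * x)
  | ser {ts : List (SPTree E)} {t : SPTree E} {e : E} {x : ℝ} :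
      t ∈ ts → SPWeight n true t e x →
      SPWeight n false (.ser ts) e ((phiR n t.numEdges)⁻¹ * x)

/-- `SPRealizes head tail t a b S` : the decomposition tree `t` is realized in the
directed multigraph with edge endpoint maps `head`, `tail` as the two-terminal
series-parallel (sub)graph with left terminal `a`, right terminal `b` and vertex set
`S`; pieces of a parallel composition meet exactly in the two terminals, pieces of a
serial composition are chained along junction vertices and are otherwise disjoint. -/
inductive SPRealizes {V E : Type} (head tail : E → V) : SPTree E → V → V → Set V → Prop
  | leaf_pos {e : E} {a b : V} : a ≠ b → tail e = a → head e = b →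
      SPRealizes head tail (.leaf e) a b {a, b}
  | leaf_neg {e : E} {a b : V} : a ≠ b → tail e = b → head e = a →
      SPRealizes head tail (.leaf e) a b {a, b}
  | par {ts : List (SPTree E)} {a b : V} (S : Fin ts.length → Set V) :
      ts ≠ [] →
      (∀ i, SPRealizes head tail (ts.get i) a b (S i)) →
      (∀ i j, i ≠ j → S i ∩ S j = {a, b}) →
      SPRealizes head tail (.par ts) a b (⋃ i, S i)
  | ser {ts : List (SPTree E)} {a b : V} (S : Fin ts.length → Set V)
      (v : Fin (ts.length + 1) → V) :
      ts ≠ [] →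
      v 0 = a → v (Fin.last ts.length) = b →
      (∀ i, SPRealizes head tail (ts.get i) (v i.castSucc) (v i.succ) (S i)) →
      (∀ i j : Fin ts.length, (i : ℕ) + 1 = (j : ℕ) → S i ∩ S j = {v j.castSucc}) →
      (∀ i j : Fin ts.length, (i : ℕ) + 1 < (j : ℕ) → S i ∩ S j = ∅) →
      SPRealizes head tail (.ser ts) a b (⋃ i, S i)


/-- The dual of a two-terminal series-parallel decomposition tree: duality exchanges
parallel and serial compositions and keeps the edges. -/
def SPTree.dual {E : Type} : SPTree E → SPTree E
  | .leaf e => .leaf e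
  | .par ts => .ser (ts.attach.map (fun s => dual s.1))
  | .ser ts => .par (ts.attach.map (fun s => dual s.1))
decreasing_by
  all_goals simp only [SPTree.par.sizeOf_spec, SPTree.ser.sizeOf_spec]
  all_goals have := List.sizeOf_lt_of_mem s.2
  all_goals omega

/-- The `G*`-induced weights of a serially rooted dual tree: the roles of parallel and
serial compositions in the computation of graph-induced weights are exchanged
(parallel children still contribute numerators `φ(|Γ|)`, serial children denominators
`φ(|Γ|)⁻¹`, and the dummy padding at the leaves is mirrored).  `b = true` is the
position of the root or of a child of a parallel node. -/
inductive SPWeightD {E : Type} (n : ℕ) : Bool → SPTree E → E → ℝ → Prop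
  | leafP (e : E) : SPWeightD n true (.leaf e) e 1
  | leafS (e : E) : SPWeightD n false (.leaf e) e (phiR n 1)
  | ser {ts : List (SPTree E)} {t : SPTree E} {e : E} {x : ℝ} :
      t ∈ ts → SPWeightD n false t e x →
      SPWeightD n true (.ser ts) e ((phiR n t.numEdges)⁻¹ * x)
  | par {ts : List (SPTree E)} {t : SPTree E} {e : E} {x : ℝ} :
      t ∈ ts → SPWeightD n true t e x →
      SPWeightD n false (.par ts) e (phiR n t.numEdges * x)

/-!
Duality swaps `par` and `ser` and the two weight recursions are mirror images of each other:
a `par` step contributes `φ(|Γ|)` to `w` exactly where the dual `ser` step contributes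
`φ(|Γ|)⁻¹` to `w*`, and the leaf paddings are `1` against `1` and `φ(1)⁻¹` against `φ(1)`.
Since the edges of the pieces of a composition are disjoint, an edge determines the
decomposition chain in `t` and in `t.dual` alike, so the two products run over the same
chain and are reciprocal factor by factor.
-/

namespace SPTree

variable {E : Type}

@[simp]
lemma edgeList_leaf (e : E) : (leaf e).edgeList = [e] := by
  rw [edgeList]

@[simp]
lemma edgeList_par (ts : List (SPTree E)) : (par ts).edgeList = (ts.map edgeList).flatten := by
  rw [edgeList, List.map_attach_eq_pmap, List.pmap_eq_map]

@[simp]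
lemma edgeList_ser (ts : List (SPTree E)) : (ser ts).edgeList = (ts.map edgeList).flatten := by
  rw [edgeList, List.map_attach_eq_pmap, List.pmap_eq_map]

@[simp]
lemma dual_leaf (e : E) : (leaf e).dual = leaf e := by
  rw [dual]

@[simp]
lemma dual_par (ts : List (SPTree E)) : (par ts).dual = ser (ts.map dual) := by
  rw [dual, List.map_attach_eq_pmap, List.pmap_eq_map]

@[simp]
lemma dual_ser (ts : List (SPTree E)) : (ser ts).dual = par (ts.map dual) := by
  rw [dual, List.map_attach_eq_pmap, List.pmap_eq_map]

@[simp]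
lemma edgeList_dual : ∀ t : SPTree E, t.dual.edgeList = t.edgeList
  | leaf e => by rw [dual_leaf]
  | par ts | ser ts => by
      simp only [dual_par, dual_ser, edgeList_par, edgeList_ser, List.map_map]
      congr 1
      exact List.map_congr_left fun s _ => edgeList_dual s

@[simp]
lemma numEdges_dual (t : SPTree E) : t.dual.numEdges = t.numEdges := by
  rw [numEdges, numEdges, edgeList_dual]

lemma eq_of_mem_edgeList_of_nodup {ts : List (SPTree E)} (hnd : (ts.map edgeList).flatten.Nodup)
    {s t : SPTree E} (hs : s ∈ ts) (ht : t ∈ ts) {e : E} (hes : e ∈ s.edgeList)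
    (het : e ∈ t.edgeList) : s = t := by
  have hdisj : ts.Pairwise fun a b => a.edgeList.Disjoint b.edgeList :=
    List.pairwise_map.mp (List.nodup_flatten.mp hnd).2
  have : Std.Symm fun a b : SPTree E => a.edgeList.Disjoint b.edgeList := ⟨fun _ _ h => h.symm⟩
  by_contra hne
  exact hdisj.forall hs ht hne hes het

lemma eq_dual_of_mem_map_dual {ts : List (SPTree E)} (hnd : (ts.map edgeList).flatten.Nodup)
    {d t : SPTree E} (hd : d ∈ ts.map dual) (ht : t ∈ ts) {e : E} (hed : e ∈ d.edgeList)
    (het : e ∈ t.edgeList) : d = t.dual := by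
  obtain ⟨s, hs, rfl⟩ := List.mem_map.mp hd
  rw [edgeList_dual] at hed
  rw [eq_of_mem_edgeList_of_nodup hnd hs ht hed het]

end SPTree

lemma SPWeight.mem_edgeList {E : Type} {n : ℕ} {b : Bool} {t : SPTree E} {e : E} {x : ℝ}
    (h : SPWeight n b t e x) : e ∈ t.edgeList := by
  induction h with
  | leafP | leafS => simp
  | par hmem _ ih | ser hmem _ ih =>
      simpa using ⟨_, hmem, ih⟩

lemma SPWeightD.mem_edgeList {E : Type} {n : ℕ} {b : Bool} {t : SPTree E} {e : E} {x : ℝ}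
    (h : SPWeightD n b t e x) : e ∈ t.edgeList := by
  induction h with
  | leafP | leafS => simp
  | par hmem _ ih | ser hmem _ ih =>
      simpa using ⟨_, hmem, ih⟩

theorem SPWeight.inv_eq_of_dual {E : Type} {n : ℕ} {b : Bool} {t : SPTree E} {e : E} {x y : ℝ}
    (hw : SPWeight n b t e x) (hnd : t.edgeList.Nodup) (hwd : SPWeightD n b t.dual e y) :
    y = x⁻¹ := by
  induction hw generalizing y with
  | leafP | leafS =>
      rw [SPTree.dual_leaf] at hwd
      cases hwd
      simp
  | par hmem hw ih =>
      rw [SPTree.dual_par] at hwd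
      rw [SPTree.edgeList_par] at hnd
      cases hwd with
      | ser hdmem hwd =>
        obtain rfl := SPTree.eq_dual_of_mem_map_dual hnd hdmem hmem hwd.mem_edgeList hw.mem_edgeList
        rw [ih ((List.nodup_flatten.mp hnd).1 _ (List.mem_map_of_mem hmem)) hwd,
          SPTree.numEdges_dual, mul_inv]
  | ser hmem hw ih =>
      rw [SPTree.dual_ser] at hwd
      rw [SPTree.edgeList_ser] at hnd
      cases hwd with
      | par hdmem hwd =>
        obtain rfl := SPTree.eq_dual_of_mem_map_dual hnd hdmem hmem hwd.mem_edgeList hw.mem_edgeList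
        rw [ih ((List.nodup_flatten.mp hnd).1 _ (List.mem_map_of_mem hmem)) hwd,
          SPTree.numEdges_dual, mul_inv, inv_inv]

theorem sp_dual_weights_reciprocal_general (n : ℕ)
    (t : SPTree (Fin n))
    (hnodup : t.edgeList.Nodup)
    (w wdual : Fin n → ℝ)
    (hw : ∀ e, SPWeight n true t e (w e))
    (hwdual : ∀ e, SPWeightD n true t.dual e (wdual e)) :
    ∀ e, wdual e = (w e)⁻¹ :=
  fun e => (hw e).inv_eq_of_dual hnodup (hwdual e)

/-- **Dual weights are reciprocal.**  Let `G` be a nontrivial 2-connected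
series-parallel graph on `n` edges with a chosen pair of terminals, given by a
decomposition tree `t`, and let `G*` be the dual two-terminal series-parallel graph,
given by the dual tree `t.dual` (parallel and serial compositions exchanged, same
edge set).  If `w` is the `G`-induced weight function and `w*` the `G*`-induced weight
function, then `w*_e = (w_e)⁻¹` for every edge `e`. -/
theorem sp_dual_weights_reciprocal (n : ℕ) {V : Type} (head tail : Fin n → V)
    (t : SPTree (Fin n)) (l r : V)
    (hreal : SPRealizes head tail t l r Set.univ)
    (hnodup : t.edgeList.Nodup) (hall : ∀ e, e ∈ t.edgeList)
    (hroot : ∃ ts, t = SPTree.par ts ∧ 2 ≤ ts.length)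
    (w wdual : Fin n → ℝ)
    (hw : ∀ e, SPWeight n true t e (w e))
    (hwdual : ∀ e, SPWeightD n true t.dual e (wdual e)) :
    ∀ e, wdual e = (w e)⁻¹ :=
  sp_dual_weights_reciprocal_general n t hnodup w wdual hw hwdual
end

section
/- The least deviation from the coordinate subspaces is invariant under taking orthogonal complements: let n > k > 0 and let V be a k-dimensional subspace of ℝⁿ. Then the minimum, over all k-element subsets S of {1,…,n}, of the largest principal angle between V and span{e_i : i ∈ S} equals the minimum, over all (n−k)-element subsets T of {1,…,n}, of the largest principal angle between the orthogonal complement V^⊥ and span{e_i : i ∈ T}. -/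
/-- Cosine of the largest principal angle between the subspace `V ⊆ ℝⁿ` and the
coordinate subspace `span {e_i : i ∈ S}`: the infimum over unit vectors `v ∈ V` of the
norm of the orthogonal projection of `v` onto the coordinate subspace, this norm being
`√(∑_{i ∈ S} v i ^ 2)`. -/
noncomputable def coordPrincipalCos {n : ℕ} (V : Submodule ℝ (EuclideanSpace ℝ (Fin n)))
    (S : Finset (Fin n)) : ℝ :=
  sInf {r : ℝ | ∃ v ∈ V, ‖v‖ = 1 ∧ r = Real.sqrt (∑ i ∈ S, v i ^ 2)}

/-- The least deviation of `V` from the `k`-dimensional coordinate subspaces of `ℝⁿ`: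
the minimum over all `k`-element coordinate sets `S` of the largest principal angle
between `V` and `span {e_i : i ∈ S}`. -/
noncomputable def leastCoordDeviation (n k : ℕ)
    (V : Submodule ℝ (EuclideanSpace ℝ (Fin n))) : ℝ :=
  sInf {θ : ℝ | ∃ S : Finset (Fin n), S.card = k ∧
    θ = Real.arccos (coordPrincipalCos V S)}

/-!
Write `c(A, B)` for the least value of `‖P_B a‖` over unit vectors `a ∈ A`. By Pythagoras,
`c(A, B)² = 1 - ‖P_{Bᗮ}|_A‖²`, and the operator norm does not change under taking adjoints,
the adjoint of `P_{Bᗮ}|_A` being `P_A|_{Bᗮ}`; hence `c(A, B) = c(Bᗮ, Aᗮ)`. When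
`dim A = dim B`, a minimiser of `‖T x‖` on the unit sphere is an eigenvector of `T† T`, which
shows that the square map `T = P_B|_A` and its adjoint `P_A|_B` have the same minimum modulus:
`c(A, B) = c(B, A)`. So `c(V, E_S) = c(Vᗮ, E_Sᶜ)` for every coordinate subspace `E_S` with
`dim E_S = dim V`, and `S ↦ Sᶜ` matches the two families of angles.
-/

open Module Metric InnerProduct
open scoped RealInnerProductSpace

namespace ContinuousLinearMap

variable {E F : Type*} [NormedAddCommGroup E] [InnerProductSpace ℝ E]
  [NormedAddCommGroup F] [InnerProductSpace ℝ F]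

noncomputable def minModulus (T : E →L[ℝ] F) : ℝ :=
  sInf ((fun x => ‖T x‖) '' sphere 0 1)

lemma minModulus_nonneg (T : E →L[ℝ] F) : 0 ≤ minModulus T :=
  Real.sInf_nonneg (by rintro - ⟨x, -, rfl⟩; exact norm_nonneg _)

lemma minModulus_le {T : E →L[ℝ] F} {x : E} (hx : ‖x‖ = 1) : minModulus T ≤ ‖T x‖ :=
  csInf_le ⟨0, by rintro - ⟨y, -, rfl⟩; exact norm_nonneg _⟩ ⟨x, by simpa using hx, rfl⟩

variable [CompleteSpace E] [CompleteSpace F]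

lemma adjoint_apply_apply_of_isMinOn (T : E →L[ℝ] F) {x : E} (hx : ‖x‖ = 1)
    (hmin : IsMinOn (fun y => ‖T y‖) (sphere 0 1) x) : (T†) (T x) = ‖T x‖ ^ 2 • x := by
  have hx0 : x ≠ 0 := by rintro rfl; simp at hx
  have hquad : ∀ y, (T† ∘L T).reApplyInnerSelf y = ‖T y‖ ^ 2 := fun y => by
    simp [reApplyInnerSelf, adjoint_inner_left]
  have hsa : IsSelfAdjoint (T† ∘L T) := by
    rw [IsSelfAdjoint, star_eq_adjoint, adjoint_comp, adjoint_adjoint]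
  have hminq : IsMinOn (T† ∘L T).reApplyInnerSelf (sphere 0 ‖x‖) x := by
    intro y hy
    rw [hx] at hy
    show (T† ∘L T).reApplyInnerSelf x ≤ (T† ∘L T).reApplyInnerSelf y
    rw [hquad, hquad]
    gcongr
    exact hmin hy
  obtain ⟨μ, hμ⟩ : ∃ μ : ℝ, (T†) (T x) = μ • x :=
    ⟨_, Module.End.mem_eigenspace_iff.mp (hsa.hasEigenvector_of_isMinOn hx0 hminq).1⟩
  have hμ_eq : μ = ‖T x‖ ^ 2 := by
    have hinner := congrArg (fun z => ⟪z, x⟫) hμ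
    simp only [adjoint_inner_left, real_inner_self_eq_norm_sq, real_inner_smul_left, hx] at hinner
    linarith
  rw [hμ, hμ_eq]

variable [FiniteDimensional ℝ E] [FiniteDimensional ℝ F]

lemma exists_norm_adjoint_apply_eq_of_isMinOn (hdim : finrank ℝ E = finrank ℝ F)
    (T : E →L[ℝ] F) {x : E} (hx : ‖x‖ = 1) (hmin : IsMinOn (fun y => ‖T y‖) (sphere 0 1) x) :
    ∃ y : F, ‖y‖ = 1 ∧ ‖(T†) y‖ = ‖T x‖ := by
  rcases (norm_nonneg (T x)).eq_or_lt with hzero | hpos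
  · have hnotinj : ¬ Function.Injective T := fun hinj => by
      have : x = 0 := hinj (by rw [map_zero, ← norm_eq_zero, hzero])
      simp [this] at hx
    have hrange : T.range ≠ ⊤ := fun htop =>
      hnotinj ((LinearMap.injective_iff_surjective_of_finrank_eq_finrank hdim).2
        (LinearMap.range_eq_top.1 htop))
    have hker : (T†).ker ≠ ⊥ := by
      rw [← orthogonal_range, ne_eq, Submodule.orthogonal_eq_bot_iff]
      exact hrange
    obtain ⟨y, hy, hy0⟩ := Submodule.exists_mem_ne_zero_of_ne_bot hker
    refine ⟨‖y‖⁻¹ • y, norm_smul_inv_norm hy0, ?_⟩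
    rw [map_smul, show (T†) y = 0 from hy, smul_zero, norm_zero, hzero]
  · refine ⟨‖T x‖⁻¹ • T x, norm_smul_inv_norm (norm_pos_iff.1 hpos), ?_⟩
    rw [map_smul, adjoint_apply_apply_of_isMinOn T hx hmin, smul_smul, norm_smul, hx, mul_one,
      Real.norm_of_nonneg (by positivity)]
    field_simp

lemma minModulus_adjoint_le (hdim : finrank ℝ E = finrank ℝ F) (T : E →L[ℝ] F) :
    minModulus (T†) ≤ minModulus T := by
  cases subsingleton_or_nontrivial E
  · have : Subsingleton F := finrank_zero_iff.1 (hdim ▸ finrank_zero_of_subsingleton)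
    simp [minModulus, sphere_eq_empty_of_subsingleton one_ne_zero]
  · obtain ⟨x, hx, hxmin, hmin⟩ := (isCompact_sphere (0 : E) 1).exists_sInf_image_eq_and_le
      (NormedSpace.sphere_nonempty.2 zero_le_one) (f := fun y => ‖T y‖) (by fun_prop)
    rw [mem_sphere_zero_iff_norm] at hx
    obtain ⟨y, hy, hTy⟩ := exists_norm_adjoint_apply_eq_of_isMinOn hdim T hx hmin
    exact (minModulus_le hy).trans_eq (hTy.trans hxmin.symm)

lemma minModulus_adjoint (hdim : finrank ℝ E = finrank ℝ F) (T : E →L[ℝ] F) :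
    minModulus (T†) = minModulus T :=
  le_antisymm (minModulus_adjoint_le hdim T)
    (by simpa using minModulus_adjoint_le hdim.symm (T†))

end ContinuousLinearMap

namespace Submodule

open ContinuousLinearMap

variable {E : Type*} [NormedAddCommGroup E] [InnerProductSpace ℝ E] [FiniteDimensional ℝ E]

/-- Its minimum modulus is the cosine of the largest principal angle between `A` and `B`. -/
noncomputable def projBetween (A B : Submodule ℝ E) : A →L[ℝ] B :=
  B.orthogonalProjectionOnto ∘L A.subtypeL

variable {A B : Submodule ℝ E}

lemma norm_projBetween_apply (x : A) : ‖projBetween A B x‖ = ‖B.starProjection x‖ := rfl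

lemma adjoint_projBetween : (projBetween A B)† = projBetween B A := by
  rw [projBetween, projBetween, adjoint_comp, adjoint_orthogonalProjectionOnto, adjoint_subtypeL]

lemma norm_projBetween_comm : ‖projBetween A B‖ = ‖projBetween B A‖ := by
  rw [← adjoint_projBetween, LinearIsometryEquiv.norm_map]

lemma minModulus_projBetween_sq_add_norm_sq (hA : A ≠ ⊥) :
    minModulus (projBetween A B) ^ 2 + ‖projBetween A Bᗮ‖ ^ 2 = 1 := by
  have : Nontrivial A := nontrivial_iff_ne_bot.2 hA
  have hpyth : ∀ y ∈ sphere (0 : A) 1,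
      ‖projBetween A B y‖ ^ 2 + ‖projBetween A Bᗮ y‖ ^ 2 = 1 := fun y hy => by
    rw [norm_projBetween_apply, norm_projBetween_apply,
      ← norm_sq_eq_add_norm_sq_starProjection, ← coe_norm, mem_sphere_zero_iff_norm.1 hy, one_pow]
  obtain ⟨x, hx, hxmin, hmin⟩ := (isCompact_sphere (0 : A) 1).exists_sInf_image_eq_and_le
    (NormedSpace.sphere_nonempty.2 zero_le_one) (f := fun y => ‖projBetween A B y‖)
    (by fun_prop)
  have hmax : IsGreatest ((fun y => ‖projBetween A Bᗮ y‖) '' sphere 0 1)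
      ‖projBetween A Bᗮ x‖ := by
    refine ⟨⟨x, hx, rfl⟩, ?_⟩
    rintro - ⟨y, hy, rfl⟩
    refine (pow_le_pow_iff_left₀ (norm_nonneg _) (norm_nonneg _) two_ne_zero).1 ?_
    nlinarith [hpyth x hx, hpyth y hy, hmin y hy, norm_nonneg (projBetween A B x)]
  rw [minModulus, hxmin, ← sSup_sphere_eq_norm, hmax.csSup_eq, hpyth x hx]

lemma minModulus_projBetween_orthogonal (hdim : finrank ℝ A = finrank ℝ B) (hA : A ≠ ⊥)
    (hB : B ≠ ⊤) : minModulus (projBetween Aᗮ Bᗮ) = minModulus (projBetween A B) := by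
  have hdim' : finrank ℝ Bᗮ = finrank ℝ Aᗮ := by
    have := A.finrank_add_finrank_orthogonal
    have := B.finrank_add_finrank_orthogonal
    omega
  have hsq := minModulus_projBetween_sq_add_norm_sq (B := B) hA
  have hsq' := minModulus_projBetween_sq_add_norm_sq (A := Bᗮ) (B := Aᗮ)
    (by rwa [ne_eq, orthogonal_eq_bot_iff])
  rw [orthogonal_orthogonal, norm_projBetween_comm] at hsq'
  rw [← adjoint_projBetween (A := Bᗮ), minModulus_adjoint hdim']
  exact (pow_left_inj₀ (minModulus_nonneg _) (minModulus_nonneg _) two_ne_zero).1 (by linarith)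

end Submodule

namespace EuclideanSpace

variable {ι : Type*}

def coordSubspace (S : Finset ι) : Submodule ℝ (EuclideanSpace ℝ ι) where
  carrier := {v | ∀ i ∉ S, v i = 0}
  add_mem' ha hb i hi := by simp [ha i hi, hb i hi]
  zero_mem' _ _ := rfl
  smul_mem' c v hv i hi := by simp [hv i hi]

variable {S : Finset ι}

variable [DecidableEq ι]

lemma single_mem_coordSubspace {i : ι} (hi : i ∈ S) (a : ℝ) : single i a ∈ coordSubspace S :=
  fun j hj => by simp [ne_of_mem_of_not_mem hi hj |>.symm]

variable [Fintype ι]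

lemma coordSubspace_ne_top (hS : S ≠ Finset.univ) : coordSubspace S ≠ ⊤ := by
  obtain ⟨i, hi⟩ : ∃ i, i ∉ S := by
    by_contra! h
    exact hS (Finset.eq_univ_iff_forall.2 h)
  intro htop
  have := (htop ▸ Submodule.mem_top : single i (1 : ℝ) ∈ coordSubspace S) i hi
  simp at this

lemma orthogonal_coordSubspace : (coordSubspace S)ᗮ = coordSubspace Sᶜ := by
  ext v
  refine ⟨fun h i hi => ?_, fun h => ?_⟩
  · simpa [EuclideanSpace.inner_single_left] using Submodule.inner_right_of_mem_orthogonal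
      (single_mem_coordSubspace (Finset.notMem_compl.1 hi) 1) h
  · refine (Submodule.mem_orthogonal _ _).2 fun u hu => ?_
    rw [PiLp.inner_apply]
    refine Finset.sum_eq_zero fun i _ => ?_
    by_cases hi : i ∈ S
    · simp [h i (Finset.notMem_compl.2 hi)]
    · simp [hu i hi]

lemma finrank_coordSubspace : finrank ℝ (coordSubspace S) = S.card := by
  have hle : ∀ T : Finset ι, T.card ≤ finrank ℝ (coordSubspace T) := fun T => by
    have hli := (EuclideanSpace.basisFun ι ℝ).toBasis.linearIndependent.comp
      ((↑) : T → ι) Subtype.val_injective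
    calc T.card = finrank ℝ (Submodule.span ℝ (Set.range
          ((EuclideanSpace.basisFun ι ℝ).toBasis ∘ ((↑) : T → ι)))) := by
          rw [finrank_span_eq_card hli, Fintype.card_coe]
      _ ≤ finrank ℝ (coordSubspace T) := by
          refine Submodule.finrank_mono (Submodule.span_le.2 ?_)
          rintro - ⟨i, rfl⟩
          simpa using single_mem_coordSubspace i.2 1
  have hsum := (coordSubspace S).finrank_add_finrank_orthogonal
  rw [orthogonal_coordSubspace, finrank_euclideanSpace] at hsum
  have := hle S
  have := hle Sᶜ
  have := Finset.card_add_card_compl S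
  omega

lemma starProjection_coordSubspace (v : EuclideanSpace ℝ ι) :
    (coordSubspace S).starProjection v = WithLp.toLp 2 (fun i => if i ∈ S then v i else 0) := by
  refine Submodule.eq_starProjection_of_mem_orthogonal (fun i hi => if_neg hi) ?_
  rw [orthogonal_coordSubspace]
  intro i hi
  simp [Finset.notMem_compl.1 hi]

lemma norm_starProjection_coordSubspace (v : EuclideanSpace ℝ ι) :
    ‖(coordSubspace S).starProjection v‖ = √(∑ i ∈ S, v i ^ 2) := by
  rw [starProjection_coordSubspace, EuclideanSpace.norm_eq]
  simp [apply_ite, Finset.sum_ite_mem]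

end EuclideanSpace

open EuclideanSpace ContinuousLinearMap Submodule

lemma coordPrincipalCos_eq_minModulus {n : ℕ} (V : Submodule ℝ (EuclideanSpace ℝ (Fin n)))
    (S : Finset (Fin n)) :
    coordPrincipalCos V S = minModulus (projBetween V (coordSubspace S)) := by
  rw [coordPrincipalCos, minModulus]
  congr 1
  ext r
  constructor
  · rintro ⟨v, hv, hv1, rfl⟩
    exact ⟨⟨v, hv⟩, by simpa using hv1,
      norm_projBetween_apply _ |>.trans (norm_starProjection_coordSubspace v)⟩
  · rintro ⟨v, hv1, rfl⟩
    exact ⟨v, v.2, by simpa using hv1,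
      norm_projBetween_apply v |>.trans (norm_starProjection_coordSubspace _)⟩

lemma coordPrincipalCos_orthogonal_compl {n : ℕ} {V : Submodule ℝ (EuclideanSpace ℝ (Fin n))}
    {S : Finset (Fin n)} (hdim : finrank ℝ V = S.card) (hV : V ≠ ⊥) (hS : S ≠ Finset.univ) :
    coordPrincipalCos Vᗮ Sᶜ = coordPrincipalCos V S := by
  rw [coordPrincipalCos_eq_minModulus, coordPrincipalCos_eq_minModulus,
    ← orthogonal_coordSubspace]
  exact minModulus_projBetween_orthogonal (by rw [hdim, finrank_coordSubspace]) hV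
    (coordSubspace_ne_top hS)

/-- **Invariance under orthogonal complements.**  For `n > k > 0` and a `k`-dimensional
subspace `V ⊆ ℝⁿ`, the minimum over `k`-element coordinate sets `S` of the largest
principal angle between `V` and `span {e_i : i ∈ S}` equals the minimum over
`(n−k)`-element coordinate sets `T` of the largest principal angle between `Vᗮ` and
`span {e_i : i ∈ T}`. -/
theorem leastCoordDeviation_orthogonal_complement (n k : ℕ) (hk : 0 < k) (hkn : k < n)
    (V : Submodule ℝ (EuclideanSpace ℝ (Fin n))) (hV : Module.finrank ℝ V = k) :
    leastCoordDeviation n k V = leastCoordDeviation n (n - k) Vᗮ := by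
  have hV0 : V ≠ ⊥ := by
    rintro rfl
    simp at hV
    omega
  have hne_univ : ∀ S : Finset (Fin n), S.card = k → S ≠ Finset.univ := by
    rintro S hS rfl
    simp at hS
    omega
  rw [leastCoordDeviation, leastCoordDeviation]
  congr 1
  ext θ
  constructor
  · rintro ⟨S, hSk, rfl⟩
    refine ⟨Sᶜ, by simp [Finset.card_compl, hSk], ?_⟩
    rw [coordPrincipalCos_orthogonal_compl (hV.trans hSk.symm) hV0 (hne_univ S hSk)]
  · rintro ⟨T, hT, rfl⟩
    have hTk : Tᶜ.card = k := by
      rw [Finset.card_compl, Fintype.card_fin, hT]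
      omega
    refine ⟨Tᶜ, hTk, ?_⟩
    rw [← coordPrincipalCos_orthogonal_compl (hV.trans hTk.symm) hV0 (hne_univ Tᶜ hTk), compl_compl]
end
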